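/- arXiv:1506.01362 — 2 statements merged into one kernel-verified Lean document; each statement's English description precedes it below -/
import Mathlib

section
/- Let $G_1$, $H$, $H_1, \ldots, H_r$ be connected graphs with $r \geq 2$, $G_1$ on $[m]$ with $m \geq 2$, and let $G_2 = H * (\bigsqcup_{i=1}^r H_i)$ with $H$ on $[t]$ and $H_i$ on $[n_i]$. Suppose every $n_i$ equals $1$ or is at least $m$. Then the condition '$G_1$ is complete and $(c_{G_2}(T)-1)(m-1) = |T|$ for all $T \in \mathcal{C}(G_2)$' holds if and only if: (a) for each $i$, $G_1$ is complete and $(c_{H_i}(T_i)-1)(m-1) = |T_i|$ for all $T_i \in \mathcal{C}(H_i)$; (b) $G_1$ is complete; (c) $t = (r-1)(m-1)$; and (d) for every nonempty $T \in \mathcal{C}(H)$, $(c_H(T)-1)(m-1) = |T| + \sum_{i=1}^r n_i$. -/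
open SimpleGraph Set

/-- Number of connected components of the induced subgraph of `G` on `s`. -/
noncomputable def nc {V : Type*} (G : SimpleGraph V) (s : Set V) : ℕ :=
  Nat.card (G.induce s).ConnectedComponent

/-- `T` has the cut point property for `G`: every `i ∈ T` is a cut point of the
induced subgraph on `Tᶜ ∪ {i}` (removing `i` increases the number of components). -/
def CutPointProperty {V : Type*} (G : SimpleGraph V) (T : Set V) : Prop :=
  ∀ i ∈ T, nc G (Tᶜ ∪ {i}) < nc G Tᶜ

/-- The join `G₁ * G₂` of two graphs on disjoint vertex sets. -/
def joinGraph {V₁ V₂ : Type*} (G₁ : SimpleGraph V₁) (G₂ : SimpleGraph V₂) :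
    SimpleGraph (V₁ ⊕ V₂) where
  Adj v w :=
    match v, w with
    | Sum.inl a, Sum.inl b => G₁.Adj a b
    | Sum.inr a, Sum.inr b => G₂.Adj a b
    | Sum.inl _, Sum.inr _ => True
    | Sum.inr _, Sum.inl _ => True
  symm := ⟨by rintro (a | a) (b | b) h <;> simp_all <;> exact h.symm⟩
  loopless := ⟨by rintro (a | a) h <;> simp_all⟩

/-- Disjoint union of an indexed family of graphs. -/
def sigmaGraph {ι : Type*} {V : ι → Type*} (G : ∀ i, SimpleGraph (V i)) :
    SimpleGraph (Σ i, V i) where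
  Adj v w := ∃ h : v.1 = w.1, (G w.1).Adj (h ▸ v.2) w.2
  symm := ⟨by
    rintro ⟨i, a⟩ ⟨j, b⟩ ⟨h, hab⟩
    dsimp at h hab ⊢
    subst h
    exact ⟨rfl, hab.symm⟩⟩
  loopless := ⟨by
    rintro ⟨i, a⟩ ⟨h, hab⟩
    dsimp at h hab
    exact (G i).irrefl hab⟩
/-- The corona `H ⊙ H'`: one copy of `H'` for each vertex `v` of `H`,
with every vertex of the copy joined to `v`. -/
def coronaGraph {V₁ V₂ : Type*} (H : SimpleGraph V₁) (H' : SimpleGraph V₂) :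
    SimpleGraph (V₁ ⊕ V₁ × V₂) where
  Adj v w :=
    match v, w with
    | Sum.inl a, Sum.inl b => H.Adj a b
    | Sum.inl a, Sum.inr p => a = p.1
    | Sum.inr p, Sum.inl b => p.1 = b
    | Sum.inr p, Sum.inr q => p.1 = q.1 ∧ H'.Adj p.2 q.2
  symm := ⟨by
    rintro (a | p) (b | q) h <;> dsimp at h ⊢
    · exact h.symm
    · exact h.symm
    · exact h.symm
    · exact ⟨h.1.symm, h.2.symm⟩⟩
  loopless := ⟨by rintro (a | p) h <;> simp_all⟩

/-- The whisker graph `W(H)`: a pendant vertex attached to each vertex of `H`. -/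
def whiskerGraph {V : Type*} (H : SimpleGraph V) : SimpleGraph (V ⊕ V) where
  Adj v w :=
    match v, w with
    | Sum.inl a, Sum.inl b => H.Adj a b
    | Sum.inl a, Sum.inr b => a = b
    | Sum.inr a, Sum.inl b => a = b
    | Sum.inr _, Sum.inr _ => False
  symm := ⟨by rintro (a | a) (b | b) h <;> simp_all; exact h.symm⟩
  loopless := ⟨by rintro (a | a) h <;> simp_all⟩

/-- `F` is (the vertex set of) a maximal clique of `G`. -/
def MaxClique {V : Type*} (G : SimpleGraph V) (F : Set V) : Prop :=
  Maximal G.IsClique F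

/-- A graph is chordal if every cycle of length at least 4 has a chord. -/
def IsChordal {V : Type*} (G : SimpleGraph V) : Prop :=
  ∀ (n : ℕ), 4 ≤ n → ∀ c : ℕ → V, Set.InjOn c (Set.Iio n) →
    (∀ i < n, G.Adj (c i) (c ((i + 1) % n))) →
    ∃ i < n, ∃ j < n, j ≠ i ∧ j ≠ (i + 1) % n ∧ i ≠ (j + 1) % n ∧ G.Adj (c i) (c j)

/-- A generalized block graph: a connected chordal graph in which any three distinct
maximal cliques with nonempty common intersection have all pairwise intersections equal. -/
def GenBlockGraph {V : Type*} (G : SimpleGraph V) : Prop :=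
  G.Connected ∧ IsChordal G ∧
    ∀ F₁ F₂ F₃ : Set V, MaxClique G F₁ → MaxClique G F₂ → MaxClique G F₃ →
      F₁ ≠ F₂ → F₁ ≠ F₃ → F₂ ≠ F₃ → (F₁ ∩ F₂ ∩ F₃).Nonempty →
      F₁ ∩ F₂ = F₁ ∩ F₃ ∧ F₁ ∩ F₂ = F₂ ∩ F₃

/-- `A` is a cut set of `G`: deleting `A` increases the number of connected components. -/
def IsCutSet {V : Type*} (G : SimpleGraph V) (A : Set V) : Prop :=
  nc G Set.univ < nc G Aᶜ

/-- `A` is an inclusion-minimal cut set of `G`. -/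
def IsMinCutSet {V : Type*} (G : SimpleGraph V) (A : Set V) : Prop :=
  IsCutSet G A ∧ ∀ B ⊂ A, ¬ IsCutSet G B

/-- `A` is a `t`-minimal cut set of `G`: a minimal cut set which is the common
intersection of exactly `t` maximal cliques of `G` and disjoint from all other
maximal cliques. -/
def IsTMinCut {V : Type*} (G : SimpleGraph V) (t : ℕ) (A : Set V) : Prop :=
  IsMinCutSet G A ∧
  {F : Set V | MaxClique G F ∧ A ⊆ F}.ncard = t ∧
  ⋂₀ {F : Set V | MaxClique G F ∧ A ⊆ F} = A ∧
  ∀ F : Set V, MaxClique G F → ¬ A ⊆ F → F ∩ A = ∅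

/-- `B` is a branch of the facet `F` in the clique complex of `G`. -/
def IsBranch {V : Type*} (G : SimpleGraph V) (F B : Set V) : Prop :=
  MaxClique G B ∧ B ≠ F ∧ ∀ H : Set V, MaxClique G H → H ≠ F → H ∩ F ⊆ B ∩ F

/-- `F` is a leaf of the clique complex of `G`. -/
def IsLeafClique {V : Type*} (G : SimpleGraph V) (F : Set V) : Prop :=
  MaxClique G F ∧ ((∀ F' : Set V, MaxClique G F' → F' = F) ∨ ∃ B, IsBranch G F B)

/-- The Ene–Herzog–Hibi–Qureshi combinatorial characterization of unmixedness of the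
binomial edge ideal of a pair `(G₁, G₂)`, taken as a definition. -/
def PairUnmixed {A B : Type*} (G₁ : SimpleGraph A) (m : ℕ) (G₂ : SimpleGraph B) : Prop :=
  G₁ = ⊤ ∧ ∀ T : Set B, CutPointProperty G₂ T → (nc G₂ Tᶜ - 1) * (m - 1) = T.ncard


/-! A nonempty set with the cut point property for a join `H * K` contains a whole side, since
otherwise its complement meets both sides and is connected. For `G₂ = H * (⊔ᵢ Hᵢ)` this leaves
the sets `V(H) ∪ ⋃ᵢ Tᵢ` with every `Tᵢ` in `𝒞(Hᵢ)` (removing `V(H)` alone already disconnects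
because `r ≥ 2`), where `c_{G₂} = ∑ᵢ c_{Hᵢ}(Tᵢ)`, and the sets `T ∪ V(⊔ᵢ Hᵢ)` with `T ≠ ∅` in
`𝒞(H)`, where `c_{G₂} = c_H(T)`. Taking `T = V(H)` gives (c), then `V(H) ∪ Tᵢ` gives (a) and
the second family gives (d); conversely (a) and (c) add up to the equation for the first
family. -/

section ComponentCount
variable {V W : Type*}

lemma nc_image_embedding {G : SimpleGraph V} {G' : SimpleGraph W} (f : G ↪g G') (s : Set V) :
    nc G' (f '' s) = nc G s := by
  let e : G.induce s ≃g G'.induce (f '' s) :=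
    { toEquiv := Equiv.Set.image f s f.injective
      map_rel_iff' := by simp [Equiv.Set.image, Equiv.Set.imageOfInjOn] }
  exact Nat.card_congr e.connectedComponentEquiv.symm

lemma nc_eq_one_of_connected {G : SimpleGraph V} {s : Set V} (h : (G.induce s).Connected) :
    nc G s = 1 := by
  have := h.preconnected.subsingleton_connectedComponent
  have := h.nonempty.map (G.induce s).connectedComponentMk
  exact Nat.card_eq_one_iff_unique.mpr ⟨inferInstance, inferInstance⟩

lemma nc_univ_of_connected {G : SimpleGraph V} (h : G.Connected) : nc G univ = 1 :=
  nc_eq_one_of_connected ((induceUnivIso G).connected_iff.mpr h)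

lemma nc_empty (G : SimpleGraph V) : nc G ∅ = 0 := by
  have : IsEmpty (G.induce ∅).ConnectedComponent :=
    ⟨fun c => c.ind fun v => v.2.elim⟩
  exact Nat.card_of_isEmpty

lemma nc_pos [Finite V] {G : SimpleGraph V} {s : Set V} (h : s.Nonempty) : 0 < nc G s := by
  have : Nonempty s := h.to_subtype
  exact Nat.card_pos (α := (G.induce s).ConnectedComponent)

lemma nonempty_of_nc_pos {G : SimpleGraph V} {s : Set V} (h : 0 < nc G s) : s.Nonempty := by
  rw [nonempty_iff_ne_empty]
  rintro rfl
  rw [nc_empty] at h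
  exact h.false

namespace CutPointProperty

variable [Finite V] {G : SimpleGraph V} {T : Set V}

lemma one_lt_nc_compl (h : CutPointProperty G T) (hT : T.Nonempty) : 1 < nc G Tᶜ := by
  obtain ⟨i, hi⟩ := hT
  exact lt_of_lt_of_le' (h i hi) (nc_pos ⟨i, Or.inr rfl⟩)

lemma nc_compl_pos [Nonempty V] (h : CutPointProperty G T) : 0 < nc G Tᶜ := by
  rcases T.eq_empty_or_nonempty with rfl | hT
  · exact nc_pos (by simp)
  · exact zero_lt_one.trans (h.one_lt_nc_compl hT)

end CutPointProperty

end ComponentCount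

lemma Fintype.sum_lt_sum_iff_of_eq_off {ι : Type*} [Fintype ι] [DecidableEq ι] {f g : ι → ℕ}
    (i : ι) (h : ∀ j ≠ i, f j = g j) : ∑ j, f j < ∑ j, g j ↔ f i < g i := by
  rw [← Finset.add_sum_erase _ f (Finset.mem_univ i),
    ← Finset.add_sum_erase _ g (Finset.mem_univ i),
    Finset.sum_congr rfl fun j hj => h j (Finset.ne_of_mem_erase hj), add_lt_add_iff_right]

lemma Fintype.sum_sub_one_eq {ι : Type*} [Fintype ι] [Nonempty ι] {f : ι → ℕ}
    (hf : ∀ i, 1 ≤ f i) : ∑ i, f i - 1 = ∑ i, (f i - 1) + (Fintype.card ι - 1) := by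
  have hsum : ∑ i, f i = ∑ i, (f i - 1) + Fintype.card ι := by
    rw [← Finset.card_univ, Finset.card_eq_sum_ones, ← Finset.sum_add_distrib]
    exact Finset.sum_congr rfl fun i _ => (Nat.sub_add_cancel (hf i)).symm
  have := Fintype.card_pos (α := ι)
  omega

namespace sigmaGraph

variable {ι : Type*} {V : ι → Type*} (G : ∀ i, SimpleGraph (V i))

def embedding (i : ι) : G i ↪g sigmaGraph G where
  toFun := Sigma.mk i
  inj' := sigma_mk_injective
  map_rel_iff' := ⟨fun ⟨_, h⟩ => h, fun h => ⟨rfl, h⟩⟩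

lemma connectedComponentMk_eq_of_walk {x y : Σ i, V i} (w : (sigmaGraph G).Walk x y) :
    (⟨x.1, (G x.1).connectedComponentMk x.2⟩ : Σ i, (G i).ConnectedComponent) =
      ⟨y.1, (G y.1).connectedComponentMk y.2⟩ := by
  induction w with
  | nil => rfl
  | @cons u v w huv _ ih =>
    obtain ⟨i, a⟩ := u
    obtain ⟨j, b⟩ := v
    obtain ⟨h, hab⟩ := huv
    dsimp at h hab
    subst h
    refine Eq.trans ?_ ih
    exact Sigma.ext rfl (heq_of_eq (ConnectedComponent.connectedComponentMk_eq_of_adj hab))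

def connectedComponentEquiv :
    (sigmaGraph G).ConnectedComponent ≃ Σ i, (G i).ConnectedComponent where
  toFun c := c.lift (fun x => ⟨x.1, (G x.1).connectedComponentMk x.2⟩)
    fun _ _ w _ => connectedComponentMk_eq_of_walk G w
  invFun p := p.2.map (embedding G p.1).toHom
  left_inv c := by
    refine c.ind fun _ => ?_
    rfl
  right_inv := by
    rintro ⟨_, c⟩
    refine c.ind fun _ => ?_
    rfl

def induceIso (s : Set (Σ i, V i)) :
    (sigmaGraph G).induce s ≃g sigmaGraph fun i => (G i).induce (Sigma.mk i ⁻¹' s) where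
  toFun x := ⟨x.1.1, x.1.2, x.2⟩
  invFun y := ⟨⟨y.1, y.2.1⟩, y.2.2⟩
  map_rel_iff' := by
    rintro ⟨⟨i, a⟩, ha⟩ ⟨⟨j, b⟩, hb⟩
    constructor <;>
    · rintro ⟨h, hab⟩
      cases h
      exact ⟨rfl, hab⟩

variable [Fintype ι] [∀ i, Finite (V i)]

lemma nc_eq_sum (s : Set (Σ i, V i)) :
    nc (sigmaGraph G) s = ∑ i, nc (G i) (Sigma.mk i ⁻¹' s) := by
  rw [nc, Nat.card_congr (induceIso G s).connectedComponentEquiv,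
    Nat.card_congr (connectedComponentEquiv _), Nat.card_sigma]
  rfl

lemma cutPointProperty_iff (u : Set (Σ i, V i)) :
    CutPointProperty (sigmaGraph G) u ↔ ∀ i, CutPointProperty (G i) (Sigma.mk i ⁻¹' u) := by
  have key : ∀ i a, nc (sigmaGraph G) (uᶜ ∪ {⟨i, a⟩}) < nc (sigmaGraph G) uᶜ ↔
      nc (G i) ((Sigma.mk i ⁻¹' u)ᶜ ∪ {a}) < nc (G i) (Sigma.mk i ⁻¹' u)ᶜ := by
    classical
    intro i a
    have hx : ({⟨i, a⟩} : Set (Σ i, V i)) = Sigma.mk i '' {a} := image_singleton.symm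
    rw [nc_eq_sum, nc_eq_sum, Fintype.sum_lt_sum_iff_of_eq_off i fun j hj => ?_, hx,
      preimage_union, sigma_mk_preimage_image_eq_self, preimage_compl]
    rw [hx, preimage_union, sigma_mk_preimage_image' hj.symm, union_empty]
  simp only [CutPointProperty, Sigma.forall]
  exact forall_congr' fun i => forall₂_congr fun a _ => key i a

end sigmaGraph

lemma Set.ncard_eq_sum_ncard_preimage_sigma_mk {ι : Type*} [Fintype ι] {V : ι → Type*}
    [∀ i, Finite (V i)] (u : Set (Σ i, V i)) :
    u.ncard = ∑ i, (Sigma.mk i ⁻¹' u).ncard := by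
  let e : u ≃ Σ i, (Sigma.mk i ⁻¹' u) :=
    ⟨fun x => ⟨x.1.1, x.1.2, x.2⟩, fun y => ⟨⟨y.1, y.2.1⟩, y.2.2⟩, fun _ => rfl, fun _ => rfl⟩
  simp only [← Nat.card_coe_set_eq, Nat.card_congr e, Nat.card_sigma]

namespace Set

variable {A B : Type*}

lemma compl_range_inl_union_image_inr (u : Set B) :
    (range (Sum.inl : A → A ⊕ B) ∪ Sum.inr '' u)ᶜ = Sum.inr '' uᶜ := by
  ext (a | b) <;> simp

lemma compl_image_inl_union_range_inr (u : Set A) :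
    (Sum.inl '' u ∪ range (Sum.inr : B → A ⊕ B))ᶜ = Sum.inl '' uᶜ := by
  ext (a | b) <;> simp

lemma eq_range_inl_union_image_inr_preimage {T : Set (A ⊕ B)} (h : range Sum.inl ⊆ T) :
    T = range Sum.inl ∪ Sum.inr '' (Sum.inr ⁻¹' T) := by
  ext x
  rcases x with a | b
  · simp [h ⟨a, rfl⟩]
  · simp

lemma eq_image_inl_preimage_union_range_inr {T : Set (A ⊕ B)} (h : range Sum.inr ⊆ T) :
    T = Sum.inl '' (Sum.inl ⁻¹' T) ∪ range Sum.inr := by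
  ext x
  rcases x with a | b
  · simp
  · simp [h ⟨b, rfl⟩]

variable [Finite A] [Finite B]

lemma ncard_range_inl_union_image_inr (u : Set B) :
    (range (Sum.inl : A → A ⊕ B) ∪ Sum.inr '' u).ncard = Nat.card A + u.ncard := by
  rw [ncard_union_eq (isCompl_range_inl_range_inr.disjoint.mono_right (image_subset_range _ _)),
    ← image_univ, ncard_image_of_injective _ Sum.inl_injective,
    ncard_image_of_injective _ Sum.inr_injective, ncard_univ]

lemma ncard_image_inl_union_range_inr (u : Set A) :
    (Sum.inl '' u ∪ range (Sum.inr : B → A ⊕ B)).ncard = u.ncard + Nat.card B := by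
  rw [ncard_union_eq (isCompl_range_inl_range_inr.disjoint.mono_left (image_subset_range _ _)),
    ← image_univ, ncard_image_of_injective _ Sum.inl_injective,
    ncard_image_of_injective _ Sum.inr_injective, ncard_univ]

end Set

namespace joinGraph

variable {A B : Type*} (H : SimpleGraph A) (K : SimpleGraph B)

def inlEmbedding : H ↪g joinGraph H K where
  toFun := Sum.inl
  inj' := Sum.inl_injective
  map_rel_iff' := Iff.rfl

def inrEmbedding : K ↪g joinGraph H K where
  toFun := Sum.inr
  inj' := Sum.inr_injective
  map_rel_iff' := Iff.rfl

lemma nc_image_inl (s : Set A) : nc (joinGraph H K) (Sum.inl '' s) = nc H s :=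
  nc_image_embedding (inlEmbedding H K) s

lemma nc_image_inr (s : Set B) : nc (joinGraph H K) (Sum.inr '' s) = nc K s :=
  nc_image_embedding (inrEmbedding H K) s

lemma nc_compl_range_inl_union_image_inr (u : Set B) :
    nc (joinGraph H K) (range Sum.inl ∪ Sum.inr '' u)ᶜ = nc K uᶜ := by
  rw [compl_range_inl_union_image_inr, nc_image_inr]

lemma nc_compl_image_inl_union_range_inr (u : Set A) :
    nc (joinGraph H K) (Sum.inl '' u ∪ range Sum.inr)ᶜ = nc H uᶜ := by
  rw [compl_image_inl_union_range_inr, nc_image_inl]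

lemma nc_eq_one {s : Set (A ⊕ B)} {a : A} {b : B} (ha : Sum.inl a ∈ s) (hb : Sum.inr b ∈ s) :
    nc (joinGraph H K) s = 1 := by
  refine nc_eq_one_of_connected ((connected_iff_exists_forall_reachable _).mpr
    ⟨⟨_, ha⟩, fun ⟨x, hx⟩ => ?_⟩)
  have hab : ((joinGraph H K).induce s).Adj ⟨_, ha⟩ ⟨_, hb⟩ := trivial
  rcases x with a' | b'
  · exact hab.reachable.trans (Adj.reachable trivial)
  · exact Adj.reachable trivial

variable {H K} [Finite A] [Finite B]

lemma range_inl_subset_or_range_inr_subset {T : Set (A ⊕ B)}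
    (h : CutPointProperty (joinGraph H K) T) (hT : T.Nonempty) :
    range Sum.inl ⊆ T ∨ range Sum.inr ⊆ T := by
  by_contra! hc
  obtain ⟨_, ⟨a, rfl⟩, ha⟩ := not_subset.mp hc.1
  obtain ⟨_, ⟨b, rfl⟩, hb⟩ := not_subset.mp hc.2
  have := h.one_lt_nc_compl hT
  rw [nc_eq_one H K (s := Tᶜ) ha hb] at this
  exact this.false

lemma cutPointProperty_range_inl_union_iff [Nonempty A] (u : Set B) :
    CutPointProperty (joinGraph H K) (range Sum.inl ∪ Sum.inr '' u) ↔
      CutPointProperty K u ∧ 1 < nc K uᶜ := by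
  have hins (b : B) : Sum.inr '' uᶜ ∪ {Sum.inr b} = (Sum.inr '' (uᶜ ∪ {b}) : Set (A ⊕ B)) := by
    rw [image_union, image_singleton]
  constructor
  · intro h
    refine ⟨fun b hb => ?_, ?_⟩
    · have := h (Sum.inr b) (Or.inr ⟨b, hb, rfl⟩)
      rwa [compl_range_inl_union_image_inr, hins, nc_image_inr, nc_image_inr] at this
    · have := h.one_lt_nc_compl ⟨Sum.inl (Classical.arbitrary A), Or.inl ⟨_, rfl⟩⟩
      rwa [compl_range_inl_union_image_inr, nc_image_inr] at this
  · rintro ⟨hK, hlt⟩ (a | b) hx <;> rw [compl_range_inl_union_image_inr]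
    · obtain ⟨b, hb⟩ := nonempty_of_nc_pos (zero_lt_one.trans hlt)
      rwa [nc_eq_one H K (Or.inr rfl) (Or.inl ⟨b, hb, rfl⟩), nc_image_inr]
    · rw [hins, nc_image_inr, nc_image_inr]
      exact hK b (by simpa using hx)

lemma cutPointProperty_image_inl_union_iff [Nonempty B] (u : Set A) :
    CutPointProperty (joinGraph H K) (Sum.inl '' u ∪ range Sum.inr) ↔
      CutPointProperty H u ∧ 1 < nc H uᶜ := by
  have hins (a : A) : Sum.inl '' uᶜ ∪ {Sum.inl a} = (Sum.inl '' (uᶜ ∪ {a}) : Set (A ⊕ B)) := by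
    rw [image_union, image_singleton]
  constructor
  · intro h
    refine ⟨fun a ha => ?_, ?_⟩
    · have := h (Sum.inl a) (Or.inl ⟨a, ha, rfl⟩)
      rwa [compl_image_inl_union_range_inr, hins, nc_image_inl, nc_image_inl] at this
    · have := h.one_lt_nc_compl ⟨Sum.inr (Classical.arbitrary B), Or.inr ⟨_, rfl⟩⟩
      rwa [compl_image_inl_union_range_inr, nc_image_inl] at this
  · rintro ⟨hH, hlt⟩ (a | b) hx <;> rw [compl_image_inl_union_range_inr]
    · rw [hins, nc_image_inl, nc_image_inl]
      exact hH a (by simpa using hx)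
    · obtain ⟨a, ha⟩ := nonempty_of_nc_pos (zero_lt_one.trans hlt)
      rwa [nc_eq_one H K (Or.inl ⟨a, ha, rfl⟩) (Or.inr rfl), nc_image_inl]

lemma nc_compl_sub_one_mul_eq_of_pairUnmixed [Nonempty B] {W : Type*} {G₁ : SimpleGraph W}
    {m : ℕ} (h : PairUnmixed G₁ m (joinGraph H K)) {T : Set A} (hT : T.Nonempty)
    (hcpp : CutPointProperty H T) :
    (nc H Tᶜ - 1) * (m - 1) = T.ncard + Nat.card B := by
  have := h.2 _ ((cutPointProperty_image_inl_union_iff T).mpr ⟨hcpp, hcpp.one_lt_nc_compl hT⟩)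
  rwa [nc_compl_image_inl_union_range_inr, ncard_image_inl_union_range_inr] at this

end joinGraph

section JoinSigma

variable {A ι W : Type*} [Fintype ι] {V : ι → Type*} [∀ i, Fintype (V i)]
  (H : SimpleGraph A) (K : ∀ i, SimpleGraph (V i)) {G₁ : SimpleGraph W} {m : ℕ}

lemma cutPointProperty_joinGraph_sigmaGraph_iff [Fintype A] [Nonempty A] [∀ i, Nonempty (V i)]
    (hι : 2 ≤ Fintype.card ι) (u : Set (Σ i, V i)) :
    CutPointProperty (joinGraph H (sigmaGraph K)) (range Sum.inl ∪ Sum.inr '' u) ↔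
      ∀ i, CutPointProperty (K i) (Sigma.mk i ⁻¹' u) := by
  rw [joinGraph.cutPointProperty_range_inl_union_iff, sigmaGraph.cutPointProperty_iff,
    and_iff_left_iff_imp, sigmaGraph.nc_eq_sum]
  intro h
  calc 1 < Fintype.card ι := hι
    _ = ∑ _i : ι, 1 := by simp
    _ ≤ ∑ i, nc (K i) (Sigma.mk i ⁻¹' uᶜ) := Finset.sum_le_sum fun i _ => by
      rw [preimage_compl]
      exact (h i).nc_compl_pos

lemma nc_compl_joinGraph_sigmaGraph_sub_one_mul [Nonempty ι] {u : Set (Σ i, V i)}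
    (hu : ∀ i, 0 < nc (K i) (Sigma.mk i ⁻¹' u)ᶜ) (k : ℕ) :
    (nc (joinGraph H (sigmaGraph K)) (range Sum.inl ∪ Sum.inr '' u)ᶜ - 1) * k =
      ∑ i, (nc (K i) (Sigma.mk i ⁻¹' u)ᶜ - 1) * k + (Fintype.card ι - 1) * k := by
  rw [joinGraph.nc_compl_range_inl_union_image_inr, sigmaGraph.nc_eq_sum]
  simp only [preimage_compl]
  rw [Fintype.sum_sub_one_eq hu, add_mul, Finset.sum_mul]

lemma ncard_range_inl_union_image_inr_sigma [Fintype A] (u : Set (Σ i, V i)) :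
    (range (Sum.inl : A → A ⊕ Σ i, V i) ∪ Sum.inr '' u).ncard =
      Fintype.card A + ∑ i, (Sigma.mk i ⁻¹' u).ncard := by
  rw [ncard_range_inl_union_image_inr, Nat.card_eq_fintype_card,
    ncard_eq_sum_ncard_preimage_sigma_mk]

variable [Fintype A]

lemma card_eq_of_pairUnmixed_joinGraph_sigmaGraph [Nonempty A] (hK : ∀ i, (K i).Connected)
    (hι : 2 ≤ Fintype.card ι) (h : PairUnmixed G₁ m (joinGraph H (sigmaGraph K))) :
    Fintype.card A = (Fintype.card ι - 1) * (m - 1) := by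
  have := fun i => (hK i).nonempty
  have : Nonempty ι := Fintype.card_pos_iff.mp (by omega)
  have hcpp : ∀ i, CutPointProperty (K i) (Sigma.mk i ⁻¹' ∅) := fun _ _ hx => hx.elim
  have := h.2 _ ((cutPointProperty_joinGraph_sigmaGraph_iff H K hι ∅).mpr hcpp)
  rw [nc_compl_joinGraph_sigmaGraph_sub_one_mul H K (fun i => (hcpp i).nc_compl_pos),
    ncard_range_inl_union_image_inr_sigma] at this
  simpa [nc_univ_of_connected (hK _)] using this.symm

lemma pairUnmixed_of_pairUnmixed_joinGraph_sigmaGraph [Nonempty A] (hK : ∀ i, (K i).Connected)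
    (hι : 2 ≤ Fintype.card ι) (h : PairUnmixed G₁ m (joinGraph H (sigmaGraph K))) (i : ι) :
    PairUnmixed G₁ m (K i) := by
  classical
  have := fun i => (hK i).nonempty
  have : Nonempty ι := ⟨i⟩
  have hcard := card_eq_of_pairUnmixed_joinGraph_sigmaGraph H K hK hι h
  refine ⟨h.1, fun T hT => ?_⟩
  have hfib : ∀ j ≠ i, Sigma.mk j ⁻¹' (Sigma.mk i '' T) = ∅ :=
    fun j hj => sigma_mk_preimage_image' hj.symm
  have hcpp : ∀ j, CutPointProperty (K j) (Sigma.mk j ⁻¹' (Sigma.mk i '' T)) := by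
    intro j
    rcases eq_or_ne j i with rfl | hj
    · rwa [sigma_mk_preimage_image_eq_self]
    · rw [hfib j hj]
      exact fun _ hx => hx.elim
  have := h.2 _ ((cutPointProperty_joinGraph_sigmaGraph_iff H K hι _).mpr hcpp)
  rw [nc_compl_joinGraph_sigmaGraph_sub_one_mul H K (fun j => (hcpp j).nc_compl_pos),
    ncard_range_inl_union_image_inr_sigma, ← hcard,
    Finset.sum_eq_single i (fun j _ hj => by
      rw [hfib j hj, compl_empty, nc_univ_of_connected (hK j), Nat.sub_self, zero_mul]) (by simp),
    Finset.sum_eq_single i (fun j _ hj => by rw [hfib j hj, ncard_empty]) (by simp),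
    sigma_mk_preimage_image_eq_self] at this
  omega

lemma pairUnmixed_joinGraph_sigmaGraph (hH : H.Connected) (hK : ∀ i, (K i).Connected)
    (hι : 2 ≤ Fintype.card ι) (hKi : ∀ i, PairUnmixed G₁ m (K i)) (hG₁ : G₁ = ⊤)
    (hcard : Fintype.card A = (Fintype.card ι - 1) * (m - 1))
    (hHT : ∀ T : Set A, T.Nonempty → CutPointProperty H T →
      (nc H Tᶜ - 1) * (m - 1) = T.ncard + ∑ i, Fintype.card (V i)) :
    PairUnmixed G₁ m (joinGraph H (sigmaGraph K)) := by
  have := hH.nonempty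
  have := fun i => (hK i).nonempty
  have : Nonempty ι := Fintype.card_pos_iff.mp (by omega)
  have : Nonempty (Σ i, V i) := nonempty_sigma.mpr ⟨Classical.arbitrary ι, inferInstance⟩
  refine ⟨hG₁, fun T hT => ?_⟩
  rcases T.eq_empty_or_nonempty with rfl | hT_ne
  · rw [compl_empty, joinGraph.nc_eq_one H _ (mem_univ (Sum.inl (Classical.arbitrary A)))
      (mem_univ (Sum.inr (Classical.arbitrary (Σ i, V i))))]
    simp
  rcases joinGraph.range_inl_subset_or_range_inr_subset hT hT_ne with hA | hB
  · rw [eq_range_inl_union_image_inr_preimage hA] at hT ⊢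
    have hcpp := (cutPointProperty_joinGraph_sigmaGraph_iff H K hι _).mp hT
    rw [nc_compl_joinGraph_sigmaGraph_sub_one_mul H K (fun i => (hcpp i).nc_compl_pos),
      ncard_range_inl_union_image_inr_sigma, hcard,
      Finset.sum_congr rfl fun i _ => (hKi i).2 _ (hcpp i), add_comm]
  · rw [eq_image_inl_preimage_union_range_inr hB] at hT ⊢
    obtain ⟨hcpp, hlt⟩ := (joinGraph.cutPointProperty_image_inl_union_iff _).mp hT
    have hne : (Sum.inl ⁻¹' T).Nonempty := by
      rw [nonempty_iff_ne_empty]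
      intro he
      rw [he, compl_empty, nc_univ_of_connected hH] at hlt
      exact hlt.false
    rw [joinGraph.nc_compl_image_inl_union_range_inr, ncard_image_inl_union_range_inr,
      Nat.card_eq_fintype_card, Fintype.card_sigma]
    exact hHT _ hne hcpp

end JoinSigma

theorem stmt15_general {VG : Type*} [Fintype VG] {V₀ : Type*} [Fintype V₀]
    {r : ℕ} (hr : 2 ≤ r) {V : Fin r → Type*} [∀ i, Fintype (V i)]
    (G₁ : SimpleGraph VG) (H : SimpleGraph V₀) (Hi : ∀ i, SimpleGraph (V i))
    (hH : H.Connected) (hHi : ∀ i, (Hi i).Connected) :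
    PairUnmixed G₁ (Fintype.card VG) (joinGraph H (sigmaGraph Hi)) ↔
      ((∀ i, PairUnmixed G₁ (Fintype.card VG) (Hi i)) ∧
       G₁ = ⊤ ∧
       Fintype.card V₀ = (r - 1) * (Fintype.card VG - 1) ∧
       (∀ T : Set V₀, T.Nonempty → CutPointProperty H T →
          (nc H Tᶜ - 1) * (Fintype.card VG - 1) =
            T.ncard + ∑ i, Fintype.card (V i))) := by
  have := hH.nonempty
  have hι : 2 ≤ Fintype.card (Fin r) := by rwa [Fintype.card_fin]
  constructor
  · intro h
    refine ⟨pairUnmixed_of_pairUnmixed_joinGraph_sigmaGraph H Hi hHi hι h, h.1, ?_,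
      fun T hT hcpp => ?_⟩
    · simpa using card_eq_of_pairUnmixed_joinGraph_sigmaGraph H Hi hHi hι h
    · have := fun i => (hHi i).nonempty
      have : Nonempty (Σ i, V i) := nonempty_sigma.mpr ⟨⟨0, by omega⟩, inferInstance⟩
      rw [← Fintype.card_sigma, ← Nat.card_eq_fintype_card (α := Σ i, V i)]
      exact joinGraph.nc_compl_sub_one_mul_eq_of_pairUnmixed h hT hcpp
  · rintro ⟨hHi_unmixed, hG₁, hcard, hHT⟩
    exact pairUnmixed_joinGraph_sigmaGraph H Hi hH hHi hι hHi_unmixed hG₁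
      (by rwa [Fintype.card_fin]) hHT

/-- unmixedness of `J_{G₁, H * (⊔ᵢ Hᵢ)}` is equivalent to conditions
(a)–(d). -/
theorem stmt15 {VG : Type*} [Fintype VG] {V₀ : Type*} [Fintype V₀]
    {r : ℕ} (hr : 2 ≤ r) {V : Fin r → Type*} [∀ i, Fintype (V i)]
    (G₁ : SimpleGraph VG) (H : SimpleGraph V₀) (Hi : ∀ i, SimpleGraph (V i))
    (hG₁ : G₁.Connected) (hH : H.Connected) (hHi : ∀ i, (Hi i).Connected)
    (hm : 2 ≤ Fintype.card VG)
    (hni : ∀ i, Fintype.card (V i) = 1 ∨ Fintype.card VG ≤ Fintype.card (V i)) :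
    PairUnmixed G₁ (Fintype.card VG) (joinGraph H (sigmaGraph Hi)) ↔
      ((∀ i, PairUnmixed G₁ (Fintype.card VG) (Hi i)) ∧
       G₁ = ⊤ ∧
       Fintype.card V₀ = (r - 1) * (Fintype.card VG - 1) ∧
       (∀ T : Set V₀, T.Nonempty → CutPointProperty H T →
          (nc H Tᶜ - 1) * (Fintype.card VG - 1) =
            T.ncard + ∑ i, Fintype.card (V i))) :=
  stmt15_general hr G₁ H Hi hH hHi
end

section
/- Let $G$ be a connected generalized block graph on $[n]$, $A$ a $(q+1)$-minimal cut set of $G$ (the common intersection of the leaf clique $F_c$ and its branches $F_{t_1},\ldots,F_{t_q}$), and let $G'$ be obtained from $G$ by replacing the cliques $F_c, F_{t_1}, \ldots, F_{t_q}$ by a single clique on $F_c \cup \bigcup_{j=1}^q F_{t_j}$. Then for every $T \in \mathcal{C}(G)$: $A \not\subseteq T$ if and only if $A \cap T = \emptyset$. -/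
/-!
If `i ∈ A ∩ T` and `b ∈ A \ T`, then every maximal clique through `i` meets `A` and therefore
contains `A ∋ b`, so every neighbour of `i` other than `b` is adjacent to `b`. Adding `i` to
`Tᶜ ∋ b` then merges no components, so `i` is not a cut point of `Tᶜ ∪ {i}`. Conversely, a cut
set is nonempty.
-/

open SimpleGraph Set

lemma IsCutSet.nonempty {V : Type*} {G : SimpleGraph V} {A : Set V} (hA : IsCutSet G A) :
    A.Nonempty := by
  rw [Set.nonempty_iff_ne_empty]
  rintro rfl
  rw [IsCutSet, Set.compl_empty] at hA
  exact lt_irrefl _ hA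

lemma IsTMinCut.subset_of_mem_of_mem {V : Type*} {G : SimpleGraph V} {t : ℕ} {A F : Set V}
    {i : V} (hA : IsTMinCut G t A) (hF : MaxClique G F) (hiA : i ∈ A) (hiF : i ∈ F) :
    A ⊆ F := by
  by_contra hAF
  exact Set.eq_empty_iff_forall_notMem.mp (hA.2.2.2 F hF hAF) i ⟨hiF, hiA⟩

namespace SimpleGraph

variable {V : Type*} (G : SimpleGraph V)

lemma exists_maxClique_superset [Finite V] {s : Set V} (hs : G.IsClique s) :
    ∃ F, MaxClique G F ∧ s ⊆ F := by
  obtain ⟨F, hF, hFmax⟩ := Set.Finite.exists_maximalFor (f := id)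
    {F : Set V | G.IsClique F ∧ s ⊆ F} (Set.toFinite _) ⟨s, hs, subset_rfl⟩
  exact ⟨F, ⟨hF.1, fun C hC hFC => hFmax ⟨hC, hF.2.trans hFC⟩ hFC⟩, hF.2⟩

lemma adj_of_forall_maxClique_mem [Finite V] {i b v : V}
    (h : ∀ F, MaxClique G F → i ∈ F → b ∈ F) (hv : G.Adj i v) (hvb : v ≠ b) : G.Adj v b := by
  obtain ⟨F, hF, hivF⟩ := G.exists_maxClique_superset (isClique_pair.mpr fun _ => hv)
  exact hF.1 (hivF (by simp)) (h F hF (hivF (by simp))) hvb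

/-- Collapsing `i` onto `a` turns walks in `s ∪ {i}` into walks in `s`. -/
lemma nc_le_nc_union_singleton [Finite V] {s : Set V} {i a : V} (hi : i ∉ s) (ha : a ∈ s)
    (hnb : ∀ v, G.Adj i v → v ≠ a → G.Adj v a) : nc G s ≤ nc G (s ∪ {i}) := by
  classical
  let collapse : ↥(s ∪ {i}) → ↥s := fun x =>
    if hx : x.1 = i then ⟨a, ha⟩ else ⟨x.1, x.2.resolve_right hx⟩
  have collapse_of_ne {x : ↥(s ∪ {i})} (hx : x.1 ≠ i) :
      collapse x = ⟨x.1, x.2.resolve_right hx⟩ :=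
    dif_neg hx
  have a_reachable_collapse {x y : ↥(s ∪ {i})} (hxy : G.Adj x y) (hx : x.1 = i) :
      (G.induce s).Reachable ⟨a, ha⟩ (collapse y) := by
    have hy : y.1 ≠ i := fun hy => G.loopless.irrefl i (by rwa [hx, hy] at hxy)
    rw [collapse_of_ne hy]
    by_cases hya : y.1 = a
    · simp only [hya, Reachable.refl]
    · have hya' : (G.induce s).Adj ⟨y.1, y.2.resolve_right hy⟩ ⟨a, ha⟩ :=
        hnb y.1 (by rwa [hx] at hxy) hya
      exact hya'.reachable.symm
  have hadj : (G.induce (s ∪ {i})).Adj ≤ Function.onFun (G.induce s).Reachable collapse := by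
    intro x y hxy
    by_cases hx : x.1 = i
    · simpa only [Function.onFun, collapse, dif_pos hx] using a_reachable_collapse hxy hx
    by_cases hy : y.1 = i
    · simpa only [Function.onFun, collapse, dif_pos hy] using
        (a_reachable_collapse (G.adj_symm hxy) hy).symm
    rw [Function.onFun, collapse_of_ne hx, collapse_of_ne hy]
    exact Adj.reachable hxy
  have hreach :
      (G.induce (s ∪ {i})).Reachable ≤ Function.onFun (G.induce s).Reachable collapse := by
    simp only [reachable_eq_reflTransGen] at hadj ⊢
    exact Relation.ReflTransGen.lift' collapse hadj
  let incl := (G.induceHomOfLE (Set.subset_union_left : s ⊆ s ∪ {i})).toHom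
  refine Nat.card_le_card_of_injective (ConnectedComponent.map incl) fun C D => ?_
  refine ConnectedComponent.ind₂ (fun u v huv => ConnectedComponent.sound ?_) C D
  have collapse_incl (u : ↥s) : collapse (incl u) = u :=
    collapse_of_ne fun h => hi (h ▸ u.2)
  simpa only [Function.onFun, collapse_incl] using hreach _ _ (ConnectedComponent.exact huv)

end SimpleGraph

theorem stmt17_general {V : Type*} [Fintype V] (G : SimpleGraph V)
    {q : ℕ} (A : Set V) (hA : IsTMinCut G (q + 1) A)
    (T : Set V) (hT : CutPointProperty G T) :
    ¬ A ⊆ T ↔ A ∩ T = ∅ := by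
  constructor
  · intro hAT
    obtain ⟨b, hbA, hbT⟩ := Set.not_subset.mp hAT
    refine Set.eq_empty_iff_forall_notMem.mpr fun i ⟨hiA, hiT⟩ => ?_
    have hnb : ∀ v, G.Adj i v → v ≠ b → G.Adj v b := fun v =>
      G.adj_of_forall_maxClique_mem fun F hF hiF => hA.subset_of_mem_of_mem hF hiA hiF hbA
    exact (hT i hiT).not_ge (G.nc_le_nc_union_singleton (not_not_intro hiT) hbT hnb)
  · intro hAT hAsub
    exact hA.1.1.nonempty.not_subset_empty (hAT ▸ Set.subset_inter subset_rfl hAsub)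

/-- in a connected generalized block graph, for a `(q+1)`-minimal cut set
`A` obtained from a leaf and its branches, every `T ∈ 𝒞(G)` satisfies
`A ⊄ T ↔ A ∩ T = ∅`. -/
theorem stmt17 {V : Type*} [Fintype V] (G : SimpleGraph V)
    (hG : GenBlockGraph G)
    {q : ℕ} (hq : 1 ≤ q) (A : Set V) (hA : IsTMinCut G (q + 1) A)
    (T : Set V) (hT : CutPointProperty G T) :
    ¬ A ⊆ T ↔ A ∩ T = ∅ :=
  stmt17_general G A hA T hT
end
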